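/- arXiv:2501.12049 — 5 statements merged into one kernel-verified Lean document; each statement's English description precedes it below -/
import Mathlib

section
/- Let L > 0, let ς_Ne > 0 and ς_Di > 0 be real numbers, and let λ ∈ ℂ be such that the polynomial P_λ(μ) = μ³ + μ + λ has a root of multiplicity at least two (i.e., there exists μ₀ ∈ ℂ with μ₀³ + μ₀ + λ = 0 and 3μ₀² + 1 = 0). Suppose φ₁, φ₂ : ℝ → ℂ both satisfy the KdV spectral ODE with parameter λ on [0,L], and satisfy the boundary conditions φ₂(0) = φ₁(0), ς_Ne·φ₁''(0) + ς_Di·φ₂''(0) = 0, φ₁(L) = φ₂(L) = 0, φ₁'(0) = φ₂'(0) = 0, φ₁'(L) = 0, and φ₂''(L) = 0. Then φ₁(x) = 0 and φ₂(x) = 0 for all x ∈ [0,L]. -/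
/-!
A double root `μ` of `P_λ` satisfies `3μ² = -1`, so `μ` and `λ = -2μ/3` are purely imaginary.
For purely imaginary `λ` the quantity `|φ|² - |φ'|² + 2 Re(φ'' conj φ)` is conserved along
solutions. Comparing it at `0` and `L` for `φ₁` and `φ₂`, weighted by `ς_Ne` and `ς_Di`, the
coupling condition kills the cross terms and leaves
`(ς_Ne + ς_Di) |φ₁(0)|² + ς_Di |φ₂'(L)|² = 0`, so `φ₁(0) = φ₂(0) = 0`.
Each `φᵢ` then has initial data `(0, 0, φᵢ''(0))`, hence equals `φᵢ''(0)` times the explicit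
solution `(1/3 - μx) e^{μx} - e^{-2μx}/3`, which does not vanish at `L`; so `φᵢ''(0) = 0`.
-/

/-- A function `φ : ℝ → ℂ` satisfies the KdV spectral ODE with parameter `lam` on `[0, L]`:
it is three times continuously differentiable and `lam·φ + φ' + φ''' = 0` on `[0, L]`. -/
def KdVSpectralODE (lam : ℂ) (L : ℝ) (φ : ℝ → ℂ) : Prop :=
  ContDiff ℝ 3 φ ∧
    ∀ x ∈ Set.Icc (0 : ℝ) L, lam * φ x + deriv φ x + iteratedDeriv 3 φ x = 0

open Set Complex

noncomputable section

def kdvField (lam : ℂ) : (ℂ × ℂ × ℂ) →ₗ[ℂ] ℂ × ℂ × ℂ where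
  toFun u := (u.2.1, u.2.2, -lam * u.1 - u.2.1)
  map_add' u v := Prod.ext rfl <| Prod.ext rfl <| by
    simp only [Prod.fst_add, Prod.snd_add]
    ring
  map_smul' c u := Prod.ext rfl <| Prod.ext rfl <| by
    simp only [Prod.smul_fst, Prod.smul_snd, smul_eq_mul, RingHom.id_apply]
    ring

def kdvState (φ : ℝ → ℂ) (x : ℝ) : ℂ × ℂ × ℂ :=
  (φ x, deriv φ x, iteratedDeriv 2 φ x)

/-- Conserved when `lam.re = 0`: its derivative is `2 Re((φ' + φ''') conj φ) = -2 (Re lam) |φ|²`. -/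
def kdvEnergy (φ : ℝ → ℂ) (x : ℝ) : ℝ :=
  ‖φ x‖ ^ 2 - ‖deriv φ x‖ ^ 2 + 2 * inner ℝ (iteratedDeriv 2 φ x) (φ x)

namespace KdVSpectralODE

variable {lam : ℂ} {L : ℝ} {φ ψ : ℝ → ℂ}

theorem hasDerivAt_iteratedDeriv (h : KdVSpectralODE lam L φ) {n : ℕ} (hn : n < 3) (x : ℝ) :
    HasDerivAt (iteratedDeriv n φ) (iteratedDeriv (n + 1) φ x) x := by
  rw [iteratedDeriv_succ]
  exact (h.1.differentiable_iteratedDeriv n (by exact_mod_cast hn) x).hasDerivAt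

theorem hasDerivAt (h : KdVSpectralODE lam L φ) (x : ℝ) : HasDerivAt φ (deriv φ x) x := by
  simpa using h.hasDerivAt_iteratedDeriv (n := 0) (by norm_num) x

theorem hasDerivAt_deriv (h : KdVSpectralODE lam L φ) (x : ℝ) :
    HasDerivAt (deriv φ) (iteratedDeriv 2 φ x) x := by
  simpa using h.hasDerivAt_iteratedDeriv (n := 1) (by norm_num) x

theorem hasDerivAt_iteratedDeriv_two (h : KdVSpectralODE lam L φ) {x : ℝ} (hx : x ∈ Icc 0 L) :
    HasDerivAt (iteratedDeriv 2 φ) (-lam * φ x - deriv φ x) x := by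
  convert h.hasDerivAt_iteratedDeriv (n := 2) (by norm_num) x using 1
  linear_combination -h.2 x hx

theorem continuous_kdvState (h : KdVSpectralODE lam L φ) : Continuous (kdvState φ) :=
  (h.1.continuous.prodMk ((h.1.continuous_iteratedDeriv 1 (by norm_num)).prodMk
    (h.1.continuous_iteratedDeriv 2 (by norm_num)))).congr fun _ => by simp [kdvState]

theorem hasDerivAt_kdvState (h : KdVSpectralODE lam L φ) {x : ℝ} (hx : x ∈ Icc 0 L) :
    HasDerivAt (kdvState φ) (kdvField lam (kdvState φ x)) x :=
  (h.hasDerivAt x).prodMk ((h.hasDerivAt_deriv x).prodMk (h.hasDerivAt_iteratedDeriv_two hx))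

theorem eqOn_of_kdvState_eq (hφ : KdVSpectralODE lam L φ) (hψ : KdVSpectralODE lam L ψ)
    (h0 : kdvState φ 0 = kdvState ψ 0) : EqOn φ ψ (Icc 0 L) := fun _ hx =>
  congrArg Prod.fst <| ODE_solution_unique (v := fun _ => kdvField lam)
    (fun _ => (LinearMap.toContinuousLinearMap (kdvField lam)).lipschitz)
    hφ.continuous_kdvState.continuousOn
    (fun _ ht => (hφ.hasDerivAt_kdvState (Ico_subset_Icc_self ht)).hasDerivWithinAt)
    hψ.continuous_kdvState.continuousOn
    (fun _ ht => (hψ.hasDerivAt_kdvState (Ico_subset_Icc_self ht)).hasDerivWithinAt) h0 hx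

theorem const_mul (h : KdVSpectralODE lam L φ) (c : ℂ) :
    KdVSpectralODE lam L (fun x => c * φ x) := by
  refine ⟨contDiff_const.mul h.1, fun x hx => ?_⟩
  rw [iteratedDeriv_const_mul_field, deriv_const_mul_field]
  linear_combination c * h.2 x hx

theorem kdvEnergy_eq_of_re_eq_zero (h : KdVSpectralODE lam L φ) (hlam : lam.re = 0)
    (hL : 0 ≤ L) :
    kdvEnergy φ L = kdvEnergy φ 0 := by
  have hcont : Continuous (kdvEnergy φ) := by
    have h0 := h.1.continuous
    have h1 : Continuous (deriv φ) := by simpa using h.1.continuous_iteratedDeriv 1 (by norm_num)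
    have h2 := h.1.continuous_iteratedDeriv 2 (by norm_num)
    unfold kdvEnergy
    fun_prop
  have hderiv (t : ℝ) (ht : t ∈ Ico 0 L) : HasDerivWithinAt (kdvEnergy φ) 0 (Ici t) t := by
    have hφ := h.hasDerivAt t
    have hφ' := h.hasDerivAt_deriv t
    have hφ'' := h.hasDerivAt_iteratedDeriv_two (Ico_subset_Icc_self ht)
    refine (((hφ.norm_sq.sub hφ'.norm_sq).add ((hφ''.inner ℝ hφ).const_mul 2)).congr_deriv
      ?_).hasDerivWithinAt
    simp only [Complex.inner, mul_re, conj_re, conj_im, map_sub, map_neg, map_mul, sub_re, neg_re,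
      sub_im, neg_im, mul_im, hlam]
    ring
  exact constant_of_has_deriv_right_zero hcont.continuousOn hderiv L ⟨hL, le_rfl⟩

end KdVSpectralODE

/-- If `μ` is a double root of `P_λ`, the third root is `-2μ` (the roots sum to zero), so these
functions make up the whole solution space. -/
def expPoly (μ a b d : ℂ) (x : ℝ) : ℂ :=
  (a + b * x) * cexp (μ * x) + d * cexp (-2 * μ * x)

theorem hasDerivAt_expPoly (μ a b d : ℂ) (x : ℝ) :
    HasDerivAt (expPoly μ a b d) (expPoly μ (b + μ * a) (μ * b) (-2 * μ * d) x) x := by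
  have hx : HasDerivAt (fun y : ℝ => (y : ℂ)) 1 x := ofRealCLM.hasDerivAt
  refine ((((hx.const_mul b).const_add a).mul (hx.const_mul μ).cexp).add
    ((hx.const_mul (-2 * μ)).cexp.const_mul d)).congr_deriv ?_
  simp only [expPoly]
  ring

theorem deriv_expPoly (μ a b d : ℂ) :
    deriv (expPoly μ a b d) = expPoly μ (b + μ * a) (μ * b) (-2 * μ * d) :=
  funext fun x => (hasDerivAt_expPoly μ a b d x).deriv

theorem contDiff_expPoly (μ a b d : ℂ) : ContDiff ℝ 3 (expPoly μ a b d) := by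
  have : ContDiff ℝ 3 (fun y : ℝ => (y : ℂ)) := ofRealCLM.contDiff
  unfold expPoly
  fun_prop

theorem kdvSpectralODE_expPoly {μ lam : ℂ} (hP : μ ^ 3 + μ + lam = 0) (hP' : 3 * μ ^ 2 + 1 = 0)
    (L : ℝ) (a b d : ℂ) : KdVSpectralODE lam L (expPoly μ a b d) := by
  refine ⟨contDiff_expPoly μ a b d, fun x _ => ?_⟩
  simp only [iteratedDeriv_succ', iteratedDeriv_zero, deriv_expPoly]
  unfold expPoly
  linear_combination (cexp (μ * x) * (a + b * x) + d * cexp (-2 * μ * x)) * hP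
    + (b * cexp (μ * x) - 3 * μ * d * cexp (-2 * μ * x)) * hP'

theorem re_eq_zero_of_three_mul_sq_add_one {μ : ℂ} (hμ : 3 * μ ^ 2 + 1 = 0) : μ.re = 0 := by
  have hre := congrArg re hμ
  have him := congrArg im hμ
  simp only [sq, add_re, add_im, mul_re, mul_im, re_ofNat, im_ofNat, one_re, one_im, zero_re,
    zero_im] at hre him
  rcases mul_eq_zero.1 (show μ.re * μ.im = 0 by linarith) with h | h
  · exact h
  · nlinarith [sq_nonneg μ.re]

def fundamentalSol (μ : ℂ) : ℝ → ℂ := expPoly μ (1 / 3) (-μ) (-1 / 3)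

theorem kdvState_fundamentalSol_zero {μ : ℂ} (hμ : 3 * μ ^ 2 + 1 = 0) :
    kdvState (fundamentalSol μ) 0 = (0, 0, 1) := by
  simp only [kdvState, fundamentalSol, iteratedDeriv_succ', iteratedDeriv_zero, deriv_expPoly,
    expPoly, Prod.mk.injEq]
  refine ⟨by norm_num, ?_, ?_⟩
  · simp only [ofReal_zero, mul_zero, add_zero, exp_zero, mul_one]
    ring
  · simp only [ofReal_zero, mul_zero, add_zero, exp_zero, mul_one]
    linear_combination -hμ

theorem fundamentalSol_ne_zero {μ : ℂ} (hre : μ.re = 0) (hμ : μ ≠ 0) {x : ℝ} (hx : x ≠ 0) :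
    fundamentalSol μ x ≠ 0 := by
  intro h
  -- `|1 - 3μx| > 1` while `|exp (μx)| = |exp (-2μx)| = 1`
  have him : μ.im ≠ 0 := fun him => hμ (Complex.ext hre him)
  have h1 : (1 - 3 * μ * x) * cexp (μ * x) = cexp (-2 * μ * x) := by
    simp only [fundamentalSol, expPoly] at h
    linear_combination 3 * h
  have h2 := congrArg (fun z => ‖z‖ ^ 2) h1
  simp [norm_exp, mul_re, hre, him, hx, ← normSq_eq_norm_sq, normSq_apply] at h2

theorem KdVSpectralODE.eqOn_zero_of_double_root {μ lam : ℂ} {L : ℝ} {φ : ℝ → ℂ}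
    (hP : μ ^ 3 + μ + lam = 0) (hP' : 3 * μ ^ 2 + 1 = 0) (hL : 0 < L)
    (h : KdVSpectralODE lam L φ) (h0 : φ 0 = 0) (h0' : deriv φ 0 = 0) (hL0 : φ L = 0) :
    EqOn φ 0 (Icc 0 L) := by
  set q := iteratedDeriv 2 φ 0
  have hrep : EqOn φ (fun x => q * fundamentalSol μ x) (Icc 0 L) := by
    refine h.eqOn_of_kdvState_eq ((kdvSpectralODE_expPoly hP hP' L _ _ _).const_mul q) ?_
    have hW := kdvState_fundamentalSol_zero hP'
    simp only [kdvState, Prod.mk.injEq] at hW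
    simp [kdvState, deriv_const_mul_field, iteratedDeriv_const_mul_field, hW, h0, h0', q]
  have hq : q = 0 := by
    have hWL := fundamentalSol_ne_zero (re_eq_zero_of_three_mul_sq_add_one hP')
      (by rintro rfl; norm_num at hP') hL.ne'
    simpa [hL0, hWL] using hrep ⟨hL.le, le_rfl⟩
  intro x hx
  simpa [hq] using hrep hx

end

theorem stmt3 (L : ℝ) (hL : 0 < L) (ςNe ςDi : ℝ) (hNe : 0 < ςNe) (hDi : 0 < ςDi)
    (lam : ℂ)
    (hroot : ∃ μ₀ : ℂ, μ₀ ^ 3 + μ₀ + lam = 0 ∧ 3 * μ₀ ^ 2 + 1 = 0)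
    (φ₁ φ₂ : ℝ → ℂ)
    (h1 : KdVSpectralODE lam L φ₁) (h2 : KdVSpectralODE lam L φ₂)
    (hb0 : φ₂ 0 = φ₁ 0)
    (hb1 : (ςNe : ℂ) * iteratedDeriv 2 φ₁ 0 + (ςDi : ℂ) * iteratedDeriv 2 φ₂ 0 = 0)
    (hb2 : φ₁ L = 0) (hb3 : φ₂ L = 0)
    (hb4 : deriv φ₁ 0 = 0) (hb5 : deriv φ₂ 0 = 0)
    (hb6 : deriv φ₁ L = 0) (hb7 : iteratedDeriv 2 φ₂ L = 0) :
    ∀ x ∈ Set.Icc (0 : ℝ) L, φ₁ x = 0 ∧ φ₂ x = 0 := by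
  obtain ⟨μ, hP, hP'⟩ := hroot
  have hlam : lam.re = 0 := by
    have hμ := re_eq_zero_of_three_mul_sq_add_one hP'
    rw [show lam = -(2 / 3) * μ by linear_combination hP - μ / 3 * hP']
    simp [hμ]
  have E₁ := h1.kdvEnergy_eq_of_re_eq_zero hlam hL.le
  have E₂ := h2.kdvEnergy_eq_of_re_eq_zero hlam hL.le
  simp only [kdvEnergy, hb0, hb2, hb3, hb4, hb5, hb6, hb7, norm_zero,
    inner_zero_right] at E₁ E₂
  have hcross : ςNe * inner ℝ (iteratedDeriv 2 φ₁ 0) (φ₁ 0)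
      + ςDi * inner ℝ (iteratedDeriv 2 φ₂ 0) (φ₁ 0) = 0 := by
    have := congrArg (fun z => inner ℝ z (φ₁ 0)) hb1
    simpa [inner_add_left, ← Complex.real_smul, real_inner_smul_left] using this
  have ha : φ₁ 0 = 0 := by
    have key : (ςNe + ςDi) * ‖φ₁ 0‖ ^ 2 + ςDi * ‖deriv φ₂ L‖ ^ 2 = 0 := by
      linear_combination -ςNe * E₁ - ςDi * E₂ - 2 * hcross
    have : ‖φ₁ 0‖ ^ 2 = 0 := by
      nlinarith [mul_nonneg hDi.le (sq_nonneg ‖deriv φ₂ L‖), sq_nonneg ‖φ₁ 0‖]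
    simpa using this
  intro x hx
  exact ⟨h1.eqOn_zero_of_double_root hP hP' hL ha hb4 hb2 hx,
    h2.eqOn_zero_of_double_root hP hP' hL (hb0.trans ha) hb5 hb3 hx⟩
end

section
/- Let a, b, c ∈ ℂ be pairwise distinct. There exists (d₀, d₁, d₂) ∈ ℂ³ with (d₀, d₁, d₂) ≠ (0,0,0) satisfying the four equations d₀ + d₁ + d₂ = 0, a·d₀ + b·d₁ + c·d₂ = 0, a·e^a·d₀ + b·e^b·d₁ + c·e^c·d₂ = 0, and a²·e^a·d₀ + b²·e^b·d₁ + c²·e^c·d₂ = 0, if and only if a·e^a = b·e^b = c·e^c. -/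
theorem stmt14 (a b c : ℂ) (hab : a ≠ b) (hac : a ≠ c) (hbc : b ≠ c) :
    (∃ d₀ d₁ d₂ : ℂ, ¬(d₀ = 0 ∧ d₁ = 0 ∧ d₂ = 0) ∧
      d₀ + d₁ + d₂ = 0 ∧
      a * d₀ + b * d₁ + c * d₂ = 0 ∧
      a * Complex.exp a * d₀ + b * Complex.exp b * d₁ + c * Complex.exp c * d₂ = 0 ∧
      a ^ 2 * Complex.exp a * d₀ + b ^ 2 * Complex.exp b * d₁ + c ^ 2 * Complex.exp c * d₂ = 0) ↔
    (a * Complex.exp a = b * Complex.exp b ∧ b * Complex.exp b = c * Complex.exp c) := by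
  have hab' : a - b ≠ 0 := sub_ne_zero.mpr hab
  have hac' : a - c ≠ 0 := sub_ne_zero.mpr hac
  have hbc' : b - c ≠ 0 := sub_ne_zero.mpr hbc
  constructor
  · rintro ⟨d₀, d₁, d₂, hne, h1, h2, h3, h4⟩
    have e1 : (b - c) * d₁ = (c - a) * d₀ := by linear_combination h2 - c * h1
    have e2 : (b - c) * d₂ = (a - b) * d₀ := by linear_combination b * h1 - h2
    have hd0 : d₀ ≠ 0 := by
      intro h
      apply hne
      refine ⟨h, ?_, ?_⟩
      · have : (b - c) * d₁ = 0 := by rw [e1, h, mul_zero]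
        exact (mul_eq_zero.mp this).resolve_left hbc'
      · have : (b - c) * d₂ = 0 := by rw [e2, h, mul_zero]
        exact (mul_eq_zero.mp this).resolve_left hbc'
    have P : d₀ * (a * Complex.exp a * (b - c) + b * Complex.exp b * (c - a) +
        c * Complex.exp c * (a - b)) = 0 := by
      linear_combination (b - c) * h3 - b * Complex.exp b * e1 - c * Complex.exp c * e2
    have Q : d₀ * (a ^ 2 * Complex.exp a * (b - c) + b ^ 2 * Complex.exp b * (c - a) +
        c ^ 2 * Complex.exp c * (a - b)) = 0 := by
      linear_combination (b - c) * h4 - b ^ 2 * Complex.exp b * e1 - c ^ 2 * Complex.exp c * e2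
    have P' := (mul_eq_zero.mp P).resolve_left hd0
    have Q' := (mul_eq_zero.mp Q).resolve_left hd0
    have hAB : (b - c) * ((a - c) * (a * Complex.exp a - b * Complex.exp b)) = 0 := by
      linear_combination Q' - c * P'
    have hBC : (c - a) * ((b - a) * (b * Complex.exp b - c * Complex.exp c)) = 0 := by
      linear_combination Q' - a * P'
    constructor
    · have := (mul_eq_zero.mp ((mul_eq_zero.mp hAB).resolve_left hbc')).resolve_left hac'
      exact sub_eq_zero.mp this
    · have hca : c - a ≠ 0 := sub_ne_zero.mpr (Ne.symm hac)
      have hba : b - a ≠ 0 := sub_ne_zero.mpr (Ne.symm hab)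
      have := (mul_eq_zero.mp ((mul_eq_zero.mp hBC).resolve_left hca)).resolve_left hba
      exact sub_eq_zero.mp this
  · rintro ⟨h1, h2⟩
    refine ⟨b - c, c - a, a - b, ?_, by ring, by ring, ?_, ?_⟩
    · rintro ⟨h, -, -⟩
      exact hbc' h
    · linear_combination (b - c) * h1 + (b - a) * h2
    · linear_combination (a * (b - c)) * h1 + (a * (b - c) + b * (c - a)) * h2
end

section
/- Let a, b, c ∈ ℂ be pairwise distinct and all nonzero, with a + b + c = 0, and suppose it is not the case that a·e^a = b·e^b = c·e^c. Then there exists (d₀, d₁, d₂) ∈ ℂ³ with (d₀, d₁, d₂) ≠ (0,0,0) satisfying the four equations d₀ + d₁ + d₂ = 0, a·e^a·d₀ + b·e^b·d₁ + c·e^c·d₂ = 0, a²·d₀ + b²·d₁ + c²·d₂ = 0, and a²·e^a·d₀ + b²·e^b·d₁ + c²·e^c·d₂ = 0, if and only if a²·e^a = b²·e^b = c²·e^c. -/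
theorem stmt15 (a b c : ℂ) (hab : a ≠ b) (hac : a ≠ c) (hbc : b ≠ c)
    (ha : a ≠ 0) (hb : b ≠ 0) (hc : c ≠ 0) (hsum : a + b + c = 0)
    (hnot : ¬(a * Complex.exp a = b * Complex.exp b ∧
              b * Complex.exp b = c * Complex.exp c)) :
    (∃ d₀ d₁ d₂ : ℂ, ¬(d₀ = 0 ∧ d₁ = 0 ∧ d₂ = 0) ∧
      d₀ + d₁ + d₂ = 0 ∧
      a * Complex.exp a * d₀ + b * Complex.exp b * d₁ + c * Complex.exp c * d₂ = 0 ∧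
      a ^ 2 * d₀ + b ^ 2 * d₁ + c ^ 2 * d₂ = 0 ∧
      a ^ 2 * Complex.exp a * d₀ + b ^ 2 * Complex.exp b * d₁ + c ^ 2 * Complex.exp c * d₂ = 0) ↔
    (a ^ 2 * Complex.exp a = b ^ 2 * Complex.exp b ∧
     b ^ 2 * Complex.exp b = c ^ 2 * Complex.exp c) := by
  set A := Complex.exp a with hA
  set B := Complex.exp b with hB
  set C := Complex.exp c with hC
  have hab' : a - b ≠ 0 := sub_ne_zero.2 hab
  have hac' : a - c ≠ 0 := sub_ne_zero.2 hac
  have hbc' : b - c ≠ 0 := sub_ne_zero.2 hbc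
  have hca' : c - a ≠ 0 := sub_ne_zero.2 (Ne.symm hac)
  have habs : a + b ≠ 0 := by
    intro h; apply hc; linear_combination hsum - h
  have hbcs : b + c ≠ 0 := by
    intro h; apply ha; linear_combination hsum - h
  have hacs : a + c ≠ 0 := by
    intro h; apply hb; linear_combination hsum - h
  have hbc2 : b ^ 2 - c ^ 2 ≠ 0 := by
    intro h
    rcases mul_eq_zero.1 (show (b - c) * (b + c) = 0 by linear_combination h) with h' | h'
    · exact hbc' h'
    · exact hbcs h'
  have hca2 : c ^ 2 - a ^ 2 ≠ 0 := by
    intro h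
    rcases mul_eq_zero.1 (show (c - a) * (c + a) = 0 by linear_combination h) with h' | h'
    · exact hca' h'
    · exact hacs (by linear_combination h')
  have hab2 : a ^ 2 - b ^ 2 ≠ 0 := by
    intro h
    rcases mul_eq_zero.1 (show (a - b) * (a + b) = 0 by linear_combination h) with h' | h'
    · exact hab' h'
    · exact habs h'
  constructor
  · rintro ⟨d₀, d₁, d₂, hd, e1, e2, e3, e4⟩
    have h1 : (b ^ 2 - c ^ 2) * d₁ = (c ^ 2 - a ^ 2) * d₀ := by
      linear_combination e3 - c ^ 2 * e1
    have h2 : (b ^ 2 - c ^ 2) * d₂ = (a ^ 2 - b ^ 2) * d₀ := by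
      linear_combination b ^ 2 * e1 - e3
    have hd0 : d₀ ≠ 0 := by
      intro h0
      apply hd
      refine ⟨h0, ?_, ?_⟩
      · have := h1; rw [h0, mul_zero] at this
        exact (mul_eq_zero.1 this).resolve_left hbc2
      · have := h2; rw [h0, mul_zero] at this
        exact (mul_eq_zero.1 this).resolve_left hbc2
    have E2 : a * A * (b ^ 2 - c ^ 2) + b * B * (c ^ 2 - a ^ 2) + c * C * (a ^ 2 - b ^ 2) = 0 := by
      apply mul_left_cancel₀ hd0
      rw [mul_zero]
      linear_combination (b ^ 2 - c ^ 2) * e2 - b * B * h1 - c * C * h2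
    have E4 : a ^ 2 * A * (b ^ 2 - c ^ 2) + b ^ 2 * B * (c ^ 2 - a ^ 2) + c ^ 2 * C * (a ^ 2 - b ^ 2) = 0 := by
      apply mul_left_cancel₀ hd0
      rw [mul_zero]
      linear_combination (b ^ 2 - c ^ 2) * e4 - b ^ 2 * B * h1 - c ^ 2 * C * h2
    constructor
    · apply mul_left_cancel₀ (mul_ne_zero hbc' hca')
      linear_combination E4 - c * E2 + (b - c) * (a - c) * (b * B - a * A) * hsum
    · apply mul_left_cancel₀ (mul_ne_zero hab' hac')
      linear_combination a * E2 - E4 + (a - b) * (a - c) * (b * B - c * C) * hsum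
  · rintro ⟨h1, h2⟩
    refine ⟨b ^ 2 - c ^ 2, c ^ 2 - a ^ 2, a ^ 2 - b ^ 2, ?_, by ring, ?_, by ring, ?_⟩
    · rintro ⟨h0, -, -⟩; exact hbc2 h0
    · apply mul_left_cancel₀ (mul_ne_zero (mul_ne_zero ha hb) hc)
      rw [mul_zero]
      linear_combination (-(a ^ 2 * A) * (a - b) * (b - c) * (c - a)) * hsum
        - (c * a * (c ^ 2 - a ^ 2) + a * b * (a ^ 2 - b ^ 2)) * h1
        - a * b * (a ^ 2 - b ^ 2) * h2
    · linear_combination (b ^ 2 - c ^ 2) * h1 + (b ^ 2 - a ^ 2) * h2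
end

section
/- If L > 0 belongs to the critical set 𝒩*, then 2L belongs to the critical set 𝒩†. -/
/-! Since `(2z)² e^{2z} = 4 (z e^z)²`, doubling a pair `(a, b)` witnessing `L ∈ 𝒩*` gives a pair
`(2a, 2b)` witnessing `2L ∈ 𝒩†`; the quadratic form `a² + ab + b²` scales by `4 = 2²`. -/

/-- The critical set 𝒩* of Glass and Guerrero. -/
def criticalNStar : Set ℝ :=
  {L : ℝ | 0 < L ∧ ∃ a b : ℂ,
    a * Complex.exp a = b * Complex.exp b ∧
    b * Complex.exp b = -(a + b) * Complex.exp (-(a + b)) ∧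
    (L : ℂ) ^ 2 = -(a ^ 2 + a * b + b ^ 2)}

/-- The new critical set 𝒩†. -/
def criticalNDagger : Set ℝ :=
  {L : ℝ | 0 < L ∧ ∃ a b : ℂ,
    a ^ 2 * Complex.exp a = b ^ 2 * Complex.exp b ∧
    b ^ 2 * Complex.exp b = (a + b) ^ 2 * Complex.exp (-(a + b)) ∧
    (L : ℂ) ^ 2 = -(a ^ 2 + a * b + b ^ 2)}

open Complex in
lemma two_mul_sq_mul_exp_two_mul (z : ℂ) : (2 * z) ^ 2 * exp (2 * z) = 4 * (z * exp z) ^ 2 := by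
  rw [two_mul z, exp_add]
  ring

theorem stmt16_general (L : ℝ) (hmem : L ∈ criticalNStar) :
    2 * L ∈ criticalNDagger := by
  obtain ⟨hL, a, b, hab, hb, hL2⟩ := hmem
  refine ⟨by positivity, 2 * a, 2 * b, ?_, ?_, ?_⟩
  · rw [two_mul_sq_mul_exp_two_mul, two_mul_sq_mul_exp_two_mul, hab]
  · have hsum : 2 * a + 2 * b = -(2 * -(a + b)) := by ring
    rw [two_mul_sq_mul_exp_two_mul, hb, hsum, neg_neg, neg_sq, two_mul_sq_mul_exp_two_mul]
  · push_cast
    rw [mul_pow, hL2]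
    ring

theorem stmt16 (L : ℝ) (hL : 0 < L) (hmem : L ∈ criticalNStar) :
    2 * L ∈ criticalNDagger :=
  stmt16_general L hmem
end

section
/- The critical set 𝒩† is a countable subset of the real numbers. -/
/-!
With `φ z = z² eᶻ` and `c = -(a + b)`, the conditions say `φ a = φ b = φ c`, and `L` is a function
of `(a, b)`, so it suffices that this solution set in `ℂ²` is countable. In a second-countable
space a set is countable as soon as its accumulation points inside it lie in a countable set, and
a solution at which the Jacobian of the system is invertible is isolated. Since
`z φ' z = (z + 2) φ z`, at a solution with `a ≠ 0` the Jacobian determinant is a nonzero multiple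
of the polynomial `G = 3abc + 4(ab + bc + ca)`. Repeating the argument on the solutions with
`G = 0`, now pairing each equation with `G`, the two Jacobians vanish together only at the four
points where `{a, b, c}` is `{0, 0, 0}` or `{4, -2, -2}`.
-/

open Set Filter Topology ContinuousLinearMap

theorem countable_diff_derivedSet {X : Type*} [TopologicalSpace X] [SecondCountableTopology X]
    (s : Set X) : (s \ derivedSet s).Countable :=
  (HereditarilyLindelofSpace.isLindelof _).countable <| discreteTopology_of_noAccPts
    fun _ hx hacc ↦ hx.2 (hacc.mono (principal_mono.2 sdiff_subset))

theorem Set.Countable.of_inter_derivedSet_subset {X : Type*} [TopologicalSpace X]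
    [SecondCountableTopology X] {s t : Set X} (ht : t.Countable) (h : s ∩ derivedSet s ⊆ t) :
    s.Countable :=
  ((countable_diff_derivedSet s).union ht).mono fun x hx ↦
    (em (x ∈ derivedSet s)).elim (fun h' ↦ .inr (h ⟨hx, h'⟩)) fun h' ↦ .inl ⟨hx, h'⟩

theorem HasFDerivAt.notMem_derivedSet_of_injective {𝕜 E F : Type*} [NontriviallyNormedField 𝕜]
    [CompleteSpace 𝕜] [NormedAddCommGroup E] [NormedSpace 𝕜 E] [FiniteDimensional 𝕜 E]
    [NormedAddCommGroup F] [NormedSpace 𝕜 F] {f : E → F} {f' : E →L[𝕜] F} {x : E}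
    (hf : HasFDerivAt f f' x) (hf' : Function.Injective f') {s : Set E}
    (hs : s ⊆ f ⁻¹' {f x}) : x ∉ derivedSet s := by
  obtain ⟨K, -, hK⟩ := (f' : E →ₗ[𝕜] F).injective_iff_antilipschitz.mp hf'
  intro hacc
  obtain ⟨z, hz, hne⟩ := ((accPt_iff_frequently_nhdsNE.mp hacc).and_eventually
    (hf.eventually_ne (c := f x) ⟨K, hK⟩)).exists
  exact hne (hs hz)

theorem notMem_derivedSet_of_det_ne_zero {𝕜 : Type*} [NontriviallyNormedField 𝕜] [CompleteSpace 𝕜]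
    {g₁ g₂ : 𝕜 × 𝕜 → 𝕜} {x : 𝕜 × 𝕜} {A B C D : 𝕜}
    (h₁ : HasFDerivAt g₁ (A • fst 𝕜 𝕜 𝕜 + B • snd 𝕜 𝕜 𝕜) x)
    (h₂ : HasFDerivAt g₂ (C • fst 𝕜 𝕜 𝕜 + D • snd 𝕜 𝕜 𝕜) x) (hdet : A * D - B * C ≠ 0)
    {s : Set (𝕜 × 𝕜)} (hs : s ⊆ {y | g₁ y = g₁ x ∧ g₂ y = g₂ x}) : x ∉ derivedSet s := by
  refine (h₁.prodMk h₂).notMem_derivedSet_of_injective (fun v w hvw ↦ ?_) fun y hy ↦ ?_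
  · simp only [ContinuousLinearMap.prod_apply, add_apply, smul_apply, coe_fst', smul_eq_mul,
      coe_snd', Prod.mk.injEq] at hvw
    obtain ⟨h₁, h₂⟩ := hvw
    refine Prod.ext (mul_left_cancel₀ hdet ?_) (mul_left_cancel₀ hdet ?_)
    · linear_combination D * h₁ - B * h₂
    · linear_combination A * h₂ - C * h₁
  · exact Prod.ext_iff.2 (hs hy)

namespace CriticalNDagger

open Complex

noncomputable def sqExp (z : ℂ) : ℂ := z ^ 2 * exp z

noncomputable def sqExpDeriv (z : ℂ) : ℂ := (z ^ 2 + 2 * z) * exp z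

theorem hasDerivAt_sqExp (z : ℂ) : HasDerivAt sqExp (sqExpDeriv z) z := by
  refine ((hasDerivAt_pow 2 z).mul (hasDerivAt_exp z)).congr_deriv ?_
  simp [sqExpDeriv]
  ring

theorem sqExp_eq_zero {z : ℂ} : sqExp z = 0 ↔ z = 0 := by
  simp [sqExp, exp_ne_zero]

theorem mul_sqExpDeriv (z : ℂ) : z * sqExpDeriv z = (z + 2) * sqExp z := by
  simp only [sqExp, sqExpDeriv]
  ring

noncomputable def gap₁ (p : ℂ × ℂ) : ℂ := sqExp p.1 - sqExp p.2

noncomputable def gap₂ (p : ℂ × ℂ) : ℂ := sqExp p.2 - sqExp (-(p.1 + p.2))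

def solutions : Set (ℂ × ℂ) := {p | gap₁ p = 0 ∧ gap₂ p = 0}

theorem hasFDerivAt_gap₁ (p : ℂ × ℂ) :
    HasFDerivAt gap₁ (sqExpDeriv p.1 • fst ℂ ℂ ℂ + (-sqExpDeriv p.2) • snd ℂ ℂ ℂ) p := by
  refine HasFDerivAt.congr_fderiv (((hasDerivAt_sqExp p.1).comp_hasFDerivAt p hasFDerivAt_fst).sub
    ((hasDerivAt_sqExp p.2).comp_hasFDerivAt p hasFDerivAt_snd)) ?_
  ext <;> simp

theorem hasFDerivAt_gap₂ (p : ℂ × ℂ) :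
    HasFDerivAt gap₂ (sqExpDeriv (-(p.1 + p.2)) • fst ℂ ℂ ℂ +
      (sqExpDeriv p.2 + sqExpDeriv (-(p.1 + p.2))) • snd ℂ ℂ ℂ) p := by
  have hc : HasFDerivAt (fun q : ℂ × ℂ ↦ -(q.1 + q.2)) (-(fst ℂ ℂ ℂ + snd ℂ ℂ ℂ)) p :=
    (hasFDerivAt_fst.add hasFDerivAt_snd).neg
  refine HasFDerivAt.congr_fderiv (((hasDerivAt_sqExp p.2).comp_hasFDerivAt p hasFDerivAt_snd).sub
    ((hasDerivAt_sqExp _).comp_hasFDerivAt p hc)) ?_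
  ext <;> simp

def degeneracy (p : ℂ × ℂ) : ℂ :=
  -3 * p.1 * p.2 * (p.1 + p.2) + 4 * p.1 * p.2 - 4 * (p.1 + p.2) ^ 2

def degeneracyDerivFst (p : ℂ × ℂ) : ℂ := -3 * p.2 * (2 * p.1 + p.2) + 4 * p.2 - 8 * (p.1 + p.2)

def degeneracyDerivSnd (p : ℂ × ℂ) : ℂ := -3 * p.1 * (p.1 + 2 * p.2) + 4 * p.1 - 8 * (p.1 + p.2)

theorem hasFDerivAt_degeneracy (p : ℂ × ℂ) :
    HasFDerivAt degeneracy
      (degeneracyDerivFst p • fst ℂ ℂ ℂ + degeneracyDerivSnd p • snd ℂ ℂ ℂ) p := by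
  have hx : HasFDerivAt (fun q : ℂ × ℂ ↦ q.1) (fst ℂ ℂ ℂ) p := hasFDerivAt_fst
  have hy : HasFDerivAt (fun q : ℂ × ℂ ↦ q.2) (snd ℂ ℂ ℂ) p := hasFDerivAt_snd
  refine HasFDerivAt.congr_fderiv (((((hx.const_mul (-3)).mul hy).mul (hx.add hy)).add
    ((hx.const_mul 4).mul hy)).sub ((hx.add hy).pow 2 |>.const_mul 4)) ?_
  ext <;> simp [degeneracyDerivFst, degeneracyDerivSnd] <;> ring

def degenerateSolutions : Set (ℂ × ℂ) := {p | p ∈ solutions ∧ degeneracy p = 0}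

section Algebra

/- In the determinant identities `u, v, t` stand for `sqExpDeriv` at `a, b, c = -(a + b)` and `w`
for the common value of `sqExp` there. -/
variable {a b u v t w : ℂ}

theorem det_jacobian_gap_mul_eq (hu : a * u = (a + 2) * w) (hv : b * v = (b + 2) * w)
    (ht : -(a + b) * t = (-(a + b) + 2) * w) :
    (u * (v + t) - -v * t) * (a * b * -(a + b)) = w ^ 2 * degeneracy (a, b) := by
  simp only [degeneracy]
  linear_combination (-(a + b) * v * b + b * t * -(a + b)) * hu +
    (-(a + b) * w * (a + 2) + a * t * -(a + b)) * hv + (b * w * (a + 2) + a * w * (b + 2)) * ht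

theorem det_jacobian_gap₁_degeneracy_mul_eq {X Y : ℂ} (hu : a * u = (a + 2) * w)
    (hv : b * v = (b + 2) * w) :
    (u * Y - -v * X) * (a * b) = w * (b * (a + 2) * Y + a * (b + 2) * X) := by
  linear_combination b * Y * hu + a * X * hv

theorem det_jacobian_gap₂_degeneracy_mul_eq {X Y : ℂ} (hv : b * v = (b + 2) * w)
    (ht : -(a + b) * t = (-(a + b) + 2) * w) :
    (t * Y - (v + t) * X) * (b * -(a + b)) =
      w * (b * (-(a + b) + 2) * Y - (-(a + b) * (b + 2) + b * (-(a + b) + 2)) * X) := by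
  linear_combination b * Y * ht - (-(a + b) * X * hv + b * X * ht)

theorem mem_of_degeneracy_eq_zero (hG : degeneracy (a, b) = 0)
    (h₁ : b * (a + 2) * degeneracyDerivSnd (a, b) + a * (b + 2) * degeneracyDerivFst (a, b) = 0)
    (h₂ : b * (-(a + b) + 2) * degeneracyDerivSnd (a, b) -
      (-(a + b) * (b + 2) + b * (-(a + b) + 2)) * degeneracyDerivFst (a, b) = 0) :
    (a, b) ∈ ({(0, 0), (4, -2), (-2, 4), (-2, -2)} : Set (ℂ × ℂ)) := by
  simp only [degeneracy, degeneracyDerivFst, degeneracyDerivSnd] at hG h₁ h₂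
  have ha : a ^ 3 * (a - 4) * (a + 2) = 0 := by
    -- eliminate `b`
    linear_combination
      ((32 : ℂ) / 18 - (16 / 18) * b + (52 / 18) * a - (30 / 18) * a * b - (1 / 4) * a * b ^ 2
        - (9 / 18) * a ^ 2 - a ^ 2 * b - (1 / 4) * a ^ 3) * hG +
      ((-8 : ℂ) / 18 + (4 / 18) * b - (5 / 18) * a + (1 / 4) * a * b + (1 / 4) * a ^ 2) * h₁ +
      ((1 : ℂ) / 18 * a) * h₂
  simp only [mul_eq_zero, pow_eq_zero_iff three_ne_zero, sub_eq_zero, add_eq_zero_iff_eq_neg] at ha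
  rcases ha with (rfl | rfl) | rfl
  · have : b ^ 2 = 0 := by linear_combination (-1 / 4 : ℂ) * hG
    simp_all
  · have : (b + 2) ^ 2 = 0 := by linear_combination (-1 / 16 : ℂ) * hG
    simp_all [add_eq_zero_iff_eq_neg]
  · have : (b - 4) * (b + 2) = 0 := by linear_combination (1 / 2 : ℂ) * hG
    simp_all [sub_eq_zero, add_eq_zero_iff_eq_neg]

end Algebra

theorem snd_eq_zero_of_mem_solutions {p : ℂ × ℂ} (hp : p ∈ solutions) (ha : p.1 = 0) :
    p.2 = 0 := by
  rw [← sqExp_eq_zero, ← sub_eq_zero.1 hp.1, ha, sqExp_eq_zero]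

theorem mul_sqExpDeriv_of_mem_solutions {p : ℂ × ℂ} (hp : p ∈ solutions) :
    p.1 * sqExpDeriv p.1 = (p.1 + 2) * sqExp p.1 ∧
    p.2 * sqExpDeriv p.2 = (p.2 + 2) * sqExp p.1 ∧
    -(p.1 + p.2) * sqExpDeriv (-(p.1 + p.2)) = (-(p.1 + p.2) + 2) * sqExp p.1 := by
  have h₁ : sqExp p.2 = sqExp p.1 := (sub_eq_zero.1 hp.1).symm
  have h₂ : sqExp (-(p.1 + p.2)) = sqExp p.1 := (sub_eq_zero.1 hp.2).symm.trans h₁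
  exact ⟨mul_sqExpDeriv _, h₁ ▸ mul_sqExpDeriv _, h₂ ▸ mul_sqExpDeriv _⟩

theorem solutions_inter_derivedSet_subset :
    solutions ∩ derivedSet solutions ⊆ degenerateSolutions := by
  rintro p ⟨hp, hacc⟩
  refine ⟨hp, by_contra fun hG ↦ ?_⟩
  obtain ⟨a, b⟩ := p
  rcases eq_or_ne a 0 with ha | ha
  · obtain rfl : b = 0 := snd_eq_zero_of_mem_solutions hp ha
    exact hG (by simp [ha, degeneracy])
  obtain ⟨hu, hv, ht⟩ := mul_sqExpDeriv_of_mem_solutions hp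
  have hdet := calc
    _ = _ := det_jacobian_gap_mul_eq hu hv ht
    _ ≠ 0 := mul_ne_zero (pow_ne_zero 2 (sqExp_eq_zero.not.2 ha)) hG
  exact notMem_derivedSet_of_det_ne_zero (hasFDerivAt_gap₁ _) (hasFDerivAt_gap₂ _)
    (left_ne_zero_of_mul hdet) (fun y hy ↦ ⟨hy.1.trans hp.1.symm, hy.2.trans hp.2.symm⟩) hacc

theorem degenerateSolutions_inter_derivedSet_subset :
    degenerateSolutions ∩ derivedSet degenerateSolutions ⊆
      {(0, 0), (4, -2), (-2, 4), (-2, -2)} := by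
  rintro p ⟨⟨hp, hG⟩, hacc⟩
  obtain ⟨a, b⟩ := p
  rcases eq_or_ne a 0 with ha | ha
  · obtain rfl : b = 0 := snd_eq_zero_of_mem_solutions hp ha
    simp [ha]
  have hw : sqExp a ≠ 0 := sqExp_eq_zero.not.2 ha
  obtain ⟨hu, hv, ht⟩ := mul_sqExpDeriv_of_mem_solutions hp
  refine mem_of_degeneracy_eq_zero hG (by_contra fun h ↦ ?_) (by_contra fun h ↦ ?_)
  · have hdet := calc
      _ = _ := det_jacobian_gap₁_degeneracy_mul_eq hu hv
      _ ≠ 0 := mul_ne_zero hw h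
    exact notMem_derivedSet_of_det_ne_zero (hasFDerivAt_gap₁ _) (hasFDerivAt_degeneracy _)
      (left_ne_zero_of_mul hdet) (fun y hy ↦ ⟨hy.1.1.trans hp.1.symm, hy.2.trans hG.symm⟩) hacc
  · have hdet := calc
      _ = _ := det_jacobian_gap₂_degeneracy_mul_eq hv ht
      _ ≠ 0 := mul_ne_zero hw h
    exact notMem_derivedSet_of_det_ne_zero (hasFDerivAt_gap₂ _) (hasFDerivAt_degeneracy _)
      (left_ne_zero_of_mul hdet) (fun y hy ↦ ⟨hy.1.2.trans hp.2.symm, hy.2.trans hG.symm⟩) hacc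

theorem solutions_countable : solutions.Countable :=
  .of_inter_derivedSet_subset (.of_inter_derivedSet_subset (toFinite _).countable
    degenerateSolutions_inter_derivedSet_subset) solutions_inter_derivedSet_subset

end CriticalNDagger

open CriticalNDagger in
theorem stmt17 : Set.Countable criticalNDagger := by
  refine (solutions_countable.image fun p ↦ √(-(p.1 ^ 2 + p.1 * p.2 + p.2 ^ 2)).re).mono ?_
  rintro L ⟨hL, a, b, h₁, h₂, hL₂⟩
  refine ⟨(a, b), ⟨sub_eq_zero.2 h₁, sub_eq_zero.2 ?_⟩, ?_⟩
  · rw [sqExp, sqExp, h₂, neg_sq]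
  · dsimp only
    rw [← hL₂, ← Complex.ofReal_pow, Complex.ofReal_re, Real.sqrt_sq hL.le]
end
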